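/- Let (τ_ℓ)_{ℓ≥1} be positive reals with τ_{ℓ+1} ≥ 2τ_ℓ, τ_1 ≥ 1, and let (c_ℓ) be complex numbers with |c_ℓ| ≤ C₀(1+τ_ℓ)^μ for some μ ≥ 0. Suppose that the function f(τ) = ∑_ℓ χ̂(τ − τ_ℓ) c_ℓ, where χ̂ is the Fourier transform of some χ ∈ C_c^∞(ℝ) with χ̂(0) = 1, satisfies |f(τ)| ≤ C(1+τ)^{−1} for all τ > 0. Then there is a constant C' such that |c_k| ≤ C'(1 + τ_k)^{−1} for all k; in particular c_k → 0. -/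

import Mathlib

open MeasureTheory
open scoped FourierTransform

open Real in
private lemma chat_eq_fourier_aux (g : ℝ → ℂ) (ξ : ℝ) :
    (∫ t : ℝ, Complex.exp (-Complex.I * ξ * t) * g t) = 𝓕 g (ξ / (2 * π)) := by
  rw [Real.fourier_real_eq_integral_exp_smul]
  congr 1
  ext t
  rw [smul_eq_mul]
  congr 2
  have h : (-2 * π * t * (ξ / (2 * π))) = -(ξ * t) := by
    field_simp
  rw [h]
  push_cast
  ring

private lemma norm_fourier_le_aux (g : ℝ → ℂ) (w : ℝ) :
    ‖𝓕 g w‖ ≤ ∫ t, ‖g t‖ :=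
  VectorFourier.norm_fourierIntegral_le_integral_norm _ _ _ _ _

open Real in
private lemma chat_decay_aux (χ : ℝ → ℂ) (hχ : ContDiff ℝ (⊤ : ℕ∞) χ) (hχsupp : HasCompactSupport χ)
    (n : ℕ) :
    ∃ D : ℝ, 0 ≤ D ∧ ∀ ξ : ℝ,
      ‖(∫ t : ℝ, Complex.exp (-Complex.I * ξ * t) * χ t)‖ * (1 + |ξ|) ^ n ≤ D := by
  have hsupp : ∀ m : ℕ, HasCompactSupport (iteratedDeriv m χ) := by
    intro m
    apply (hχsupp.iteratedFDeriv (𝕜 := ℝ) m).mono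
    intro x hx
    simp only [Function.mem_support] at hx ⊢
    intro h
    apply hx
    have h2 := norm_iteratedFDeriv_eq_norm_iteratedDeriv (𝕜 := ℝ) (f := χ) (n := m) (x := x)
    rw [h, norm_zero] at h2
    exact norm_eq_zero.mp h2.symm
  have hcont : ∀ m : ℕ, Continuous (iteratedDeriv m χ) := fun m =>
    hχ.continuous_iteratedDeriv m (by exact_mod_cast le_top)
  have hint : ∀ m : ℕ, Integrable (iteratedDeriv m χ) := fun m =>
    (hcont m).integrable_of_hasCompactSupport (hsupp m)
  set M0 : ℝ := ∫ t, ‖χ t‖ with hM0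
  set Mn : ℝ := ∫ t, ‖iteratedDeriv n χ t‖ with hMn
  have hM0nn : 0 ≤ M0 := integral_nonneg fun t => norm_nonneg _
  have hMnnn : 0 ≤ Mn := integral_nonneg fun t => norm_nonneg _
  have hb0 : ∀ w : ℝ, ‖𝓕 χ w‖ ≤ M0 := fun w => norm_fourier_le_aux χ w
  have hχ' : ContDiff ℝ (((⊤ : ℕ∞) : WithTop ℕ∞)) χ := hχ.of_le (by simp)
  have hbn : ∀ w : ℝ, ‖𝓕 χ w‖ * |2 * π * w| ^ n ≤ Mn := by
    intro w
    have key := Real.fourier_iteratedDeriv (N := (⊤ : ℕ∞)) (n := n) hχ'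
      (fun m _ => hint m) le_top
    have h1 : ‖𝓕 (iteratedDeriv n χ) w‖ ≤ Mn := norm_fourier_le_aux _ w
    rw [key] at h1
    have h2 : ‖(2 * ↑π * Complex.I * (w : ℂ)) ^ n • 𝓕 χ w‖
        = |2 * π * w| ^ n * ‖𝓕 χ w‖ := by
      rw [norm_smul, norm_pow]
      congr 2
      have : (2 * ↑π * Complex.I * (w : ℂ)) = ((2 * π * w : ℝ) : ℂ) * Complex.I := by
        push_cast; ring
      rw [this, norm_mul, Complex.norm_I, mul_one, Complex.norm_real, Real.norm_eq_abs]
    rw [h2] at h1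
    linarith [h1]
  refine ⟨2 ^ n * (M0 + Mn), by positivity, fun ξ => ?_⟩
  have hπ : (0 : ℝ) < 2 * π := by positivity
  set w : ℝ := ξ / (2 * π) with hw
  have hchat : (∫ t : ℝ, Complex.exp (-Complex.I * ξ * t) * χ t) = 𝓕 χ w :=
    chat_eq_fourier_aux χ ξ
  rw [hchat]
  have habs : |2 * π * w| = |ξ| := by
    rw [hw]
    rw [abs_mul, abs_div, abs_mul]
    have : |(2:ℝ)| * |π| ≠ 0 := by positivity
    field_simp [abs_of_pos Real.pi_pos]
  have hξn : ‖𝓕 χ w‖ * |ξ| ^ n ≤ Mn := by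
    have := hbn w
    rwa [habs] at this
  have hpow : (1 + |ξ|) ^ n ≤ 2 ^ n * (1 + |ξ| ^ n) := by
    have h1 : (1 + |ξ|) ≤ 2 * max 1 |ξ| := by
      rcases le_total 1 |ξ| with h | h
      · rw [max_eq_right h]; linarith
      · rw [max_eq_left h]; linarith [abs_nonneg ξ]
    have h2 : (max 1 |ξ|) ^ n ≤ 1 + |ξ| ^ n := by
      rcases le_total 1 |ξ| with h | h
      · rw [max_eq_right h]
        nlinarith [pow_nonneg (abs_nonneg ξ) n]
      · rw [max_eq_left h, one_pow]
        nlinarith [pow_nonneg (abs_nonneg ξ) n]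
    calc (1 + |ξ|) ^ n ≤ (2 * max 1 |ξ|) ^ n :=
          pow_le_pow_left₀ (by positivity) h1 n
      _ = 2 ^ n * (max 1 |ξ|) ^ n := by rw [mul_pow]
      _ ≤ 2 ^ n * (1 + |ξ| ^ n) := by
          apply mul_le_mul_of_nonneg_left h2 (by positivity)
  calc ‖𝓕 χ w‖ * (1 + |ξ|) ^ n
      ≤ ‖𝓕 χ w‖ * (2 ^ n * (1 + |ξ| ^ n)) :=
        mul_le_mul_of_nonneg_left hpow (norm_nonneg _)
    _ = 2 ^ n * (‖𝓕 χ w‖ + ‖𝓕 χ w‖ * |ξ| ^ n) := by ring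
    _ ≤ 2 ^ n * (M0 + Mn) :=
        mul_le_mul_of_nonneg_left (add_le_add (hb0 w) hξn) (by positivity)

private lemma tau_grow_aux (τ : ℕ → ℝ) (hpos : ∀ ℓ, 1 ≤ ℓ → 0 < τ ℓ)
    (hsparse : ∀ ℓ, 1 ≤ ℓ → 2 * τ ℓ ≤ τ (ℓ + 1)) :
    ∀ a b : ℕ, 1 ≤ a → a ≤ b → 2 ^ (b - a) * τ a ≤ τ b := by
  intro a b ha hab
  induction b, hab using Nat.le_induction with
  | base => simp
  | succ b hab ih =>
    have h1 : 2 * τ b ≤ τ (b + 1) := hsparse b (le_trans ha hab)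
    have h2 : b + 1 - a = (b - a) + 1 := by omega
    rw [h2, pow_succ]
    have h3 : (0:ℝ) < 2 ^ (b - a) := by positivity
    nlinarith [hpos a ha]

private lemma tau_mono_aux (τ : ℕ → ℝ) (hpos : ∀ ℓ, 1 ≤ ℓ → 0 < τ ℓ)
    (hsparse : ∀ ℓ, 1 ≤ ℓ → 2 * τ ℓ ≤ τ (ℓ + 1)) :
    ∀ a b : ℕ, 1 ≤ a → a ≤ b → τ a ≤ τ b := by
  intro a b ha hab
  have h := tau_grow_aux τ hpos hsparse a b ha hab
  have h2 : (1:ℝ) ≤ 2 ^ (b - a) := one_le_pow₀ (by norm_num)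
  nlinarith [hpos a ha]

/-- Recovering the decay of the coefficients `c_ℓ` from the decay of
`f(τ) = ∑_ℓ χ̂(τ − τ_ℓ) c_ℓ` for a sparse sequence `(τ_ℓ)`: if
`τ_{ℓ+1} ≥ 2τ_ℓ`, `τ_1 ≥ 1`, `|c_ℓ| ≤ C₀(1+τ_ℓ)^μ`, `χ ∈ C_c^∞(ℝ)` with
`χ̂(0) = 1`, and `|f(τ)| ≤ C(1+τ)^{−1}` for `τ > 0`, then
`|c_k| ≤ C′(1+τ_k)^{−1}` for all `k`; in particular `c_k → 0`. -/
theorem coefficient_decay_from_sum_decay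
    (τ : ℕ → ℝ) (hpos : ∀ ℓ, 1 ≤ ℓ → 0 < τ ℓ)
    (hsparse : ∀ ℓ, 1 ≤ ℓ → 2 * τ ℓ ≤ τ (ℓ + 1)) (hτ1 : 1 ≤ τ 1)
    (c : ℕ → ℂ) (C₀ μ : ℝ) (hμ : 0 ≤ μ)
    (hc : ∀ ℓ, 1 ≤ ℓ → ‖c ℓ‖ ≤ C₀ * (1 + τ ℓ) ^ μ)
    (χ : ℝ → ℝ) (hχ : ContDiff ℝ (⊤ : ℕ∞) χ) (hχsupp : HasCompactSupport χ) :
    -- the Fourier transform of `χ`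
    let chat : ℝ → ℂ := fun ξ =>
      ∫ t : ℝ, Complex.exp (-Complex.I * ξ * t) * (χ t : ℂ)
    -- the function `f`
    let f : ℝ → ℂ := fun x => ∑' ℓ : {ℓ : ℕ // 1 ≤ ℓ}, chat (x - τ ℓ) * c ℓ
    chat 0 = 1 →
    ∀ C : ℝ, (∀ x : ℝ, 0 < x → ‖f x‖ ≤ C * (1 + x)⁻¹) →
    (∃ C' : ℝ, ∀ k : ℕ, 1 ≤ k → ‖c k‖ ≤ C' * (1 + τ k)⁻¹) ∧
    Filter.Tendsto c Filter.atTop (nhds 0) := by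
  intro chat f hchat0 C hC
  -- basic facts
  have htmono := tau_mono_aux τ hpos hsparse
  have htgrow := tau_grow_aux τ hpos hsparse
  have hτge1 : ∀ m, 1 ≤ m → 1 ≤ τ m := fun m hm => le_trans hτ1 (htmono 1 m le_rfl hm)
  have hC₀ : 0 ≤ C₀ := by
    have h1 := (norm_nonneg (c 1)).trans (hc 1 le_rfl)
    have h2 : (0:ℝ) < (1 + τ 1) ^ μ := Real.rpow_pos_of_pos (by linarith) μ
    nlinarith
  -- decay of chat
  set n : ℕ := ⌈μ⌉₊ + 2 with hn
  have hμn : μ + 2 ≤ (n : ℝ) := by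
    have h := Nat.le_ceil μ
    rw [hn]
    push_cast
    linarith
  have hsm : ContDiff ℝ (⊤ : ℕ∞) (fun t : ℝ => (χ t : ℂ)) := Complex.ofRealCLM.contDiff.comp hχ
  have hsp : HasCompactSupport (fun t : ℝ => (χ t : ℂ)) :=
    hχsupp.comp_left (g := Complex.ofReal) Complex.ofReal_zero
  obtain ⟨D, hD0, hD⟩ := chat_decay_aux (fun t : ℝ => (χ t : ℂ)) hsm hsp n
  have hDchat : ∀ ξ : ℝ, ‖chat ξ‖ * (1 + |ξ|) ^ n ≤ D := hD
  set A : ℝ := D * 2 ^ n * C₀ with hA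
  have hA0 : 0 ≤ A := by positivity
  -- the main estimate for each k
  have hmain : ∀ k : ℕ, 1 ≤ k → ‖c k‖ ≤ (C + 7 * A) * (1 + τ k)⁻¹ := by
    intro k hk
    set T : ℝ := 1 + τ k with hT
    have hT2 : 2 ≤ T := by have := hτge1 k hk; rw [hT]; linarith
    have hT0 : 0 < T := by linarith
    set F : ℕ → ℂ := fun ℓ => if 1 ≤ ℓ then chat (τ k - τ ℓ) * c ℓ else 0 with hFdef
    -- core pointwise estimate
    have hcore : ∀ ℓ m : ℕ, 1 ≤ ℓ → 1 ≤ m → τ ℓ ≤ τ m →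
        (1 + τ m) / 2 ≤ 1 + |τ k - τ ℓ| →
        ‖F ℓ‖ ≤ A * ((1 + τ m) ^ 2)⁻¹ := by
      intro ℓ m hℓ hm hτlm hgap
      set y : ℝ := 1 + τ m with hy
      have hy1 : 1 ≤ y := by have := hpos m hm; rw [hy]; linarith
      have hy0 : 0 < y := by linarith
      have hFval : F ℓ = chat (τ k - τ ℓ) * c ℓ := by rw [hFdef]; simp [hℓ]
      rw [hFval, norm_mul]
      have h1 : ‖chat (τ k - τ ℓ)‖ ≤ D * 2 ^ n * (y ^ n)⁻¹ := by
        have hd := hDchat (τ k - τ ℓ)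
        have hppos : (0:ℝ) < (y / 2) ^ n := by positivity
        have h2 : ‖chat (τ k - τ ℓ)‖ * (y / 2) ^ n ≤ D := by
          refine le_trans ?_ hd
          apply mul_le_mul_of_nonneg_left _ (norm_nonneg _)
          exact pow_le_pow_left₀ (by positivity) hgap n
        calc ‖chat (τ k - τ ℓ)‖
            = ‖chat (τ k - τ ℓ)‖ * (y / 2) ^ n * ((y / 2) ^ n)⁻¹ := by
              field_simp
          _ ≤ D * ((y / 2) ^ n)⁻¹ :=
              mul_le_mul_of_nonneg_right h2 (by positivity)
          _ = D * 2 ^ n * (y ^ n)⁻¹ := by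
              rw [div_pow]
              field_simp
      have h2 : ‖c ℓ‖ ≤ C₀ * y ^ μ := by
        calc ‖c ℓ‖ = ‖c ℓ‖ := rfl
          _ ≤ C₀ * (1 + τ ℓ) ^ μ := hc ℓ hℓ
          _ ≤ C₀ * y ^ μ := by
              apply mul_le_mul_of_nonneg_left _ hC₀
              apply Real.rpow_le_rpow (by linarith [hpos ℓ hℓ]) (by rw [hy]; linarith) hμ
      have hyμn : y ^ μ * ((y:ℝ) ^ n)⁻¹ ≤ (y ^ 2)⁻¹ := by
        have e1 : y ^ μ * ((y:ℝ) ^ n)⁻¹ = y ^ (μ - (n:ℝ)) := by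
          rw [← Real.rpow_natCast y n, ← Real.rpow_neg hy0.le, ← Real.rpow_add hy0]
          ring_nf
        have e2 : y ^ (μ - (n:ℝ)) ≤ y ^ (-2 : ℝ) :=
          Real.rpow_le_rpow_of_exponent_le hy1 (by linarith)
        have e3 : y ^ (-2 : ℝ) = ((y:ℝ) ^ (2:ℕ))⁻¹ := by
          rw [show (-2:ℝ) = -((2:ℕ):ℝ) by norm_num, Real.rpow_neg hy0.le, Real.rpow_natCast]
        rw [e1]
        rw [e3] at e2
        exact e2
      calc ‖chat (τ k - τ ℓ)‖ * ‖c ℓ‖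
          ≤ (D * 2 ^ n * (y ^ n)⁻¹) * (C₀ * y ^ μ) :=
            mul_le_mul h1 h2 (norm_nonneg _) (by positivity)
        _ = A * (y ^ μ * ((y:ℝ) ^ n)⁻¹) := by rw [hA]; ring
        _ ≤ A * (y ^ 2)⁻¹ := mul_le_mul_of_nonneg_left hyμn hA0
    -- estimate for ℓ < k
    have hlow : ∀ ℓ, 1 ≤ ℓ → ℓ < k → ‖F ℓ‖ ≤ A * (T ^ 2)⁻¹ := by
      intro ℓ h1 h2
      apply hcore ℓ k h1 hk (htmono ℓ k h1 h2.le)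
      have hk2 : 2 ≤ k := by omega
      have e1 : τ ℓ ≤ τ (k - 1) := htmono ℓ (k - 1) h1 (by omega)
      have e2 : 2 * τ (k - 1) ≤ τ k := by
        have := hsparse (k - 1) (by omega)
        rwa [Nat.sub_add_cancel (by omega)] at this
      have e4 : 0 ≤ τ k - τ ℓ := by linarith [hpos ℓ h1]
      rw [abs_of_nonneg e4]
      linarith
    -- estimate for ℓ > k
    have hhigh : ∀ ℓ, k < ℓ → ‖F ℓ‖ ≤ 4 * A * (T ^ 2)⁻¹ * (1/4 : ℝ) ^ (ℓ - k) := by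
      intro ℓ hkl
      have h1 : 1 ≤ ℓ := by omega
      have step1 : ‖F ℓ‖ ≤ A * ((1 + τ ℓ) ^ 2)⁻¹ := by
        apply hcore ℓ ℓ h1 h1 le_rfl
        have e1 : τ k ≤ τ (ℓ - 1) := htmono k (ℓ - 1) hk (by omega)
        have e2 : 2 * τ (ℓ - 1) ≤ τ ℓ := by
          have := hsparse (ℓ - 1) (by omega)
          rwa [Nat.sub_add_cancel (by omega)] at this
        have e4 : τ k - τ ℓ ≤ 0 := by linarith [hpos k hk]
        rw [abs_of_nonpos e4]
        linarith
      refine step1.trans ?_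
      have hτk1 : 1 ≤ τ k := hτge1 k hk
      have hg : 2 ^ (ℓ - k) * τ k ≤ τ ℓ := htgrow k ℓ hk hkl.le
      have hpk : (0:ℝ) < 2 ^ (ℓ - k) := by positivity
      have hTle : (2:ℝ) ^ (ℓ - k) * (T / 2) ≤ 1 + τ ℓ := by
        have hTk : T / 2 ≤ τ k := by rw [hT]; linarith
        nlinarith [hpos ℓ h1]
      have hq0 : (0:ℝ) < (2:ℝ) ^ (ℓ - k) * (T / 2) := by positivity
      have hinv : ((1 + τ ℓ) ^ 2)⁻¹ ≤ (((2:ℝ) ^ (ℓ - k) * (T / 2)) ^ 2)⁻¹ := by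
        apply inv_anti₀ (by positivity)
        exact pow_le_pow_left₀ hq0.le hTle 2
      have heq : A * (((2:ℝ) ^ (ℓ - k) * (T / 2)) ^ 2)⁻¹
          = 4 * A * (T ^ 2)⁻¹ * (1/4 : ℝ) ^ (ℓ - k) := by
        have h4 : ((2:ℝ) ^ (ℓ - k)) ^ 2 = 4 ^ (ℓ - k) := by
          rw [← pow_mul, mul_comm, pow_mul]
          norm_num
        have h40 : ((4:ℝ)) ^ (ℓ - k) ≠ 0 := by positivity
        rw [mul_pow, h4, one_div, inv_pow]
        field_simp
        ring
      calc A * ((1 + τ ℓ) ^ 2)⁻¹ ≤ A * (((2:ℝ) ^ (ℓ - k) * (T / 2)) ^ 2)⁻¹ :=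
            mul_le_mul_of_nonneg_left hinv hA0
        _ = 4 * A * (T ^ 2)⁻¹ * (1/4 : ℝ) ^ (ℓ - k) := heq
    -- the majorant
    set u : ℕ → ℝ := fun ℓ =>
      if ℓ < k then A * (T ^ 2)⁻¹ else 4 * A * (T ^ 2)⁻¹ * (1/4 : ℝ) ^ (ℓ - k) with hu_def
    have hGu : ∀ ℓ : ℕ, ‖if ℓ = k then (0:ℂ) else F ℓ‖ ≤ u ℓ := by
      intro ℓ
      rcases eq_or_ne ℓ k with rfl | hne
      · rw [if_pos rfl, norm_zero, hu_def]
        simp only [lt_irrefl, if_false]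
        positivity
      · rw [if_neg hne, hu_def]
        simp only
        rcases lt_or_ge ℓ k with hlt | hge
        · rw [if_pos hlt]
          rcases Nat.eq_zero_or_pos ℓ with rfl | hℓ1
          · have : F 0 = 0 := by rw [hFdef]; simp
            rw [this, norm_zero]; positivity
          · exact hlow ℓ hℓ1 hlt
        · have hgt : k < ℓ := lt_of_le_of_ne hge (Ne.symm hne)
          rw [if_neg (not_lt.mpr hge)]
          exact hhigh ℓ hgt
    have hu_sum : Summable u := by
      rw [← summable_nat_add_iff k]
      have he : (fun ℓ => u (ℓ + k)) = fun ℓ => (4 * A * (T ^ 2)⁻¹) * (1/4 : ℝ) ^ ℓ := by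
        funext ℓ
        rw [hu_def]
        simp only
        rw [if_neg (by omega), Nat.add_sub_cancel]
      rw [he]
      exact (summable_geometric_of_lt_one (by norm_num) (by norm_num)).mul_left _
    -- bound on the tsum of u
    have hkT : (k : ℝ) ≤ T := by
      have h1 : k ≤ 2 ^ (k - 1) := by
        have := Nat.lt_two_pow_self (n := k - 1)
        omega
      have h2 : ((2:ℝ)) ^ (k - 1) * τ 1 ≤ τ k := htgrow 1 k le_rfl hk
      have h3 : ((2:ℝ)) ^ (k - 1) ≤ τ k := by nlinarith [pow_pos (by norm_num : (0:ℝ) < 2) (k-1)]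
      have h4 : (k : ℝ) ≤ (2:ℝ) ^ (k - 1) := by
        calc (k : ℝ) ≤ ((2 ^ (k - 1) : ℕ) : ℝ) := by exact_mod_cast h1
          _ = (2:ℝ) ^ (k - 1) := by push_cast; ring
      rw [hT]; linarith
    have hT2inv : (T ^ 2)⁻¹ ≤ T⁻¹ := by
      apply inv_anti₀ hT0
      nlinarith
    have htsum_u : ∑' ℓ, u ℓ ≤ 7 * A * T⁻¹ := by
      rw [← hu_sum.sum_add_tsum_nat_add k]
      have hfin : ∑ i ∈ Finset.range k, u i = k * (A * (T ^ 2)⁻¹) := by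
        rw [Finset.sum_congr rfl (fun i hi => ?_), Finset.sum_const, Finset.card_range,
          nsmul_eq_mul]
        rw [hu_def]
        simp only
        rw [if_pos (Finset.mem_range.mp hi)]
      have htail : ∑' ℓ : ℕ, u (ℓ + k) = (4 * A * (T ^ 2)⁻¹) * (4/3 : ℝ) := by
        have he : (fun ℓ => u (ℓ + k)) = fun ℓ => (4 * A * (T ^ 2)⁻¹) * (1/4 : ℝ) ^ ℓ := by
          funext ℓ
          rw [hu_def]
          simp only
          rw [if_neg (by omega), Nat.add_sub_cancel]
        rw [he, tsum_mul_left, tsum_geometric_of_lt_one (by norm_num) (by norm_num)]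
        norm_num
      rw [hfin, htail]
      have hTT : T * (T ^ 2)⁻¹ = T⁻¹ := by
        rw [sq, mul_inv]
        rw [← mul_assoc, mul_inv_cancel₀ hT0.ne', one_mul]
      have hb1 : (k : ℝ) * (A * (T ^ 2)⁻¹) ≤ A * T⁻¹ := by
        calc (k : ℝ) * (A * (T ^ 2)⁻¹) ≤ T * (A * (T ^ 2)⁻¹) := by
              apply mul_le_mul_of_nonneg_right hkT (by positivity)
          _ = A * (T * (T ^ 2)⁻¹) := by ring
          _ = A * T⁻¹ := by rw [hTT]
      have hb2 : (4 * A * (T ^ 2)⁻¹) * (4/3 : ℝ) ≤ 6 * A * T⁻¹ := by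
        have : (4 * A * (T ^ 2)⁻¹) * (4/3 : ℝ) = (16/3) * A * (T ^ 2)⁻¹ := by ring
        rw [this]
        have h6 : (16/3 : ℝ) * A * (T ^ 2)⁻¹ ≤ 6 * A * (T ^ 2)⁻¹ := by
          apply mul_le_mul_of_nonneg_right _ (by positivity)
          nlinarith
        refine h6.trans ?_
        apply mul_le_mul_of_nonneg_left hT2inv (by positivity)
      linarith
    -- summability
    have hGsum : Summable (fun ℓ : ℕ => ‖if ℓ = k then (0:ℂ) else F ℓ‖) :=
      Summable.of_nonneg_of_le (fun _ => norm_nonneg _) hGu hu_sum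
    have hG'sum : Summable (fun ℓ : ℕ => if ℓ = k then (0:ℂ) else F ℓ) := hGsum.of_norm
    have hFsum : Summable F := by
      have h1 : Summable (fun ℓ : ℕ => if ℓ = k then F ℓ else 0) := by
        apply summable_of_ne_finset_zero (s := {k})
        intro b hb
        simp only [Finset.mem_singleton] at hb
        rw [if_neg hb]
      apply Summable.congr (h1.add hG'sum)
      intro b
      by_cases h : b = k <;> simp [h]
    -- identify f (τ k) with the tsum of F
    have hfk : f (τ k) = ∑' ℓ : ℕ, F ℓ := by
      have h := tsum_subtype {ℓ : ℕ | 1 ≤ ℓ} (fun ℓ => chat (τ k - τ ℓ) * c ℓ)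
      have h2 : ∀ ℓ : ℕ, Set.indicator {ℓ : ℕ | 1 ≤ ℓ} (fun ℓ => chat (τ k - τ ℓ) * c ℓ) ℓ
          = F ℓ := by
        intro ℓ
        rw [hFdef]
        simp [Set.indicator_apply, Set.mem_setOf_eq]
      calc f (τ k) = ∑' x : ↥{ℓ : ℕ | 1 ≤ ℓ}, chat (τ k - τ ↑x) * c ↑x := rfl
        _ = ∑' ℓ : ℕ, Set.indicator {ℓ : ℕ | 1 ≤ ℓ} (fun ℓ => chat (τ k - τ ℓ) * c ℓ) ℓ := h
        _ = ∑' ℓ : ℕ, F ℓ := tsum_congr h2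
    have hsplit := hFsum.tsum_eq_add_tsum_ite k
    have hFk : F k = c k := by
      rw [hFdef]
      simp only [hk, if_pos, sub_self]
      rw [hchat0, one_mul]
    set R : ℂ := ∑' ℓ : ℕ, if ℓ = k then (0:ℂ) else F ℓ with hR
    have hck : c k = f (τ k) - R := by
      rw [hfk, hsplit, hFk, hR]
      ring
    have hnormR : ‖R‖ ≤ 7 * A * T⁻¹ := by
      calc ‖R‖ ≤ ∑' ℓ : ℕ, ‖if ℓ = k then (0:ℂ) else F ℓ‖ := norm_tsum_le_tsum_norm hGsum
        _ ≤ ∑' ℓ, u ℓ := Summable.tsum_le_tsum hGu hGsum hu_sum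
        _ ≤ 7 * A * T⁻¹ := htsum_u
    have hnormf : ‖f (τ k)‖ ≤ C * T⁻¹ := by
      exact hC (τ k) (hpos k hk)
    calc ‖c k‖ = ‖c k‖ := rfl
      _ = ‖f (τ k) - R‖ := by rw [hck]
      _ ≤ ‖f (τ k)‖ + ‖R‖ := norm_sub_le _ _
      _ ≤ C * T⁻¹ + 7 * A * T⁻¹ := add_le_add hnormf hnormR
      _ = (C + 7 * A) * (1 + τ k)⁻¹ := by rw [hT]; ring
  refine ⟨⟨C + 7 * A, hmain⟩, ?_⟩
  -- tendsto
  set M : ℝ := max (C + 7 * A) 0 with hM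
  have hM0 : 0 ≤ M := le_max_right _ _
  apply squeeze_zero_norm' (a := fun k : ℕ => M * (1/2 : ℝ) ^ (k - 1))
  · filter_upwards [Filter.eventually_ge_atTop 1] with k hk
    have h1 : ‖c k‖ ≤ (C + 7 * A) * (1 + τ k)⁻¹ := hmain k hk
    have hτk0 : 0 < τ k := hpos k hk
    have hτkinv : (1 + τ k)⁻¹ ≤ (1/2 : ℝ) ^ (k - 1) := by
      have h2 : ((2:ℝ)) ^ (k - 1) * τ 1 ≤ τ k := tau_grow_aux τ hpos hsparse 1 k le_rfl hk
      have h3 : ((2:ℝ)) ^ (k - 1) ≤ 1 + τ k := by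
        nlinarith [pow_pos (by norm_num : (0:ℝ) < 2) (k-1)]
      have h4 : (1 + τ k)⁻¹ ≤ ((2:ℝ) ^ (k - 1))⁻¹ :=
        inv_anti₀ (by positivity) h3
      rw [div_pow, one_pow, one_div]
      exact h4
    calc ‖c k‖ = ‖c k‖ := rfl
      _ ≤ (C + 7 * A) * (1 + τ k)⁻¹ := h1
      _ ≤ M * (1 + τ k)⁻¹ := by
          apply mul_le_mul_of_nonneg_right (le_max_left _ _) (by positivity)
      _ ≤ M * (1/2 : ℝ) ^ (k - 1) := mul_le_mul_of_nonneg_left hτkinv hM0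
  · have h0 : Filter.Tendsto (fun k : ℕ => (1/2 : ℝ) ^ k) Filter.atTop (nhds 0) :=
      tendsto_pow_atTop_nhds_zero_of_lt_one (by norm_num) (by norm_num)
    have h1 : Filter.Tendsto (fun k : ℕ => (1/2 : ℝ) ^ (k - 1)) Filter.atTop (nhds 0) :=
      h0.comp (Filter.tendsto_sub_atTop_nat 1)
    have := h1.const_mul M
    simpa using this
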